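/- Let n ≥ 1 and let X be an n×n real symmetric positive definite matrix with (1/4)·I ≺ X ≺ I (equivalently, every eigenvalue of X lies in the open interval (1/4, 1)). Then −4·ln det X + exp(−2·tr X) − exp(−2n) > tr(X⁻¹) − n. -/

import Mathlib

/-!
Diagonalize `X`: its eigenvalues `μᵢ` lie in `(1/4, 1)`, and `tr X⁻¹ - n + 4 ln det X` is the sum
of `μᵢ⁻¹ - 1 + 4 ln μᵢ`, each term nonpositive because `ln μ ≤ μ - 1` and
`μ⁻¹ - 1 + 4 (μ - 1) = (1 - μ)(1 - 4μ)/μ`. Strictness comes from the exponentials: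
`tr X < n` as soon as `n ≥ 1`, so `exp (-2 tr X) > exp (-2n)`.
-/

open scoped ComplexOrder

namespace Matrix

variable {𝕜 n : Type*} [RCLike 𝕜] [Fintype n] [DecidableEq n] {A : Matrix n n 𝕜}

namespace IsHermitian

variable (hA : A.IsHermitian)
include hA

lemma trace_cfc_eq_sum (f : ℝ → ℝ) : (cfc f A).trace = ∑ i, (f (hA.eigenvalues i) : 𝕜) := by
  rw [cfc_eq hA f, IsHermitian.cfc, Unitary.conjStarAlgAut_apply, trace_mul_cycle,
    Unitary.coe_star_mul_self, one_mul, trace_diagonal]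
  rfl

lemma posDef_cfc_iff (f : ℝ → ℝ) : (cfc f A).PosDef ↔ ∀ i, 0 < f (hA.eigenvalues i) := by
  rw [cfc_eq hA f, IsHermitian.cfc, Unitary.conjStarAlgAut_apply,
    IsUnit.posDef_star_right_conjugate_iff Unitary.isUnit_coe, posDef_diagonal_iff]
  simp

lemma posDef_sub_smul_one_iff (c : ℝ) :
    (A - c • (1 : Matrix n n 𝕜)).PosDef ↔ ∀ i, c < hA.eigenvalues i := by
  have : cfc (fun x ↦ x - c) A = A - c • 1 := by
    rw [cfc_sub .., cfc_id' .., cfc_const .., Algebra.algebraMap_eq_smul_one]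
  simp_rw [← this, hA.posDef_cfc_iff, sub_pos]

lemma posDef_smul_one_sub_iff (c : ℝ) :
    (c • (1 : Matrix n n 𝕜) - A).PosDef ↔ ∀ i, hA.eigenvalues i < c := by
  have : cfc (fun x ↦ c - x) A = c • 1 - A := by
    rw [cfc_sub .., cfc_id' .., cfc_const .., Algebra.algebraMap_eq_smul_one]
  simp_rw [← this, hA.posDef_cfc_iff, sub_pos]

end IsHermitian

lemma PosDef.trace_inv_eq_sum_inv_eigenvalues (hA : A.PosDef) :
    A⁻¹.trace = ∑ i, ((hA.isHermitian.eigenvalues i)⁻¹ : 𝕜) := by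
  rw [nonsing_inv_eq_ringInverse,
    ← cfc_ringInverse_id (R := ℝ) _ hA.isUnit hA.isHermitian.isSelfAdjoint,
    hA.isHermitian.trace_cfc_eq_sum]
  simp only [RCLike.ofReal_inv]

lemma PosDef.log_det_eq_sum_log_eigenvalues {A : Matrix n n ℝ} (hA : A.PosDef) :
    Real.log A.det = ∑ i, Real.log (hA.isHermitian.eigenvalues i) := by
  rw [hA.isHermitian.det_eq_prod_eigenvalues]
  exact Real.log_prod fun i _ ↦ (hA.eigenvalues_pos i).ne'

end Matrix

lemma inv_sub_one_add_four_mul_log_nonpos {x : ℝ} (h₁ : 1 / 4 ≤ x) (h₂ : x ≤ 1) :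
    x⁻¹ - 1 + 4 * Real.log x ≤ 0 := by
  have hx : 0 < x := by linarith
  have hfactor : x⁻¹ - 1 + 4 * (x - 1) = (1 - x) * (1 - 4 * x) / x := by field_simp; ring
  have : (1 - x) * (1 - 4 * x) / x ≤ 0 :=
    div_nonpos_of_nonpos_of_nonneg (mul_nonpos_of_nonneg_of_nonpos (by linarith) (by linarith))
      hx.le
  linarith [Real.log_le_sub_one_of_pos hx]

theorem stmt_15 {n : ℕ} (hn : 1 ≤ n) (X : Matrix (Fin n) (Fin n) ℝ) (hX : X.PosDef)
    (h1 : (X - (1 / 4 : ℝ) • 1).PosDef)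
    (h2 : ((1 : Matrix (Fin n) (Fin n) ℝ) - X).PosDef) :
    X⁻¹.trace - n <
      -4 * Real.log X.det + Real.exp (-2 * X.trace) - Real.exp (-2 * n) := by
  set μ := hX.isHermitian.eigenvalues
  have hlow : ∀ i, 1 / 4 < μ i := (hX.isHermitian.posDef_sub_smul_one_iff _).1 h1
  have hup : ∀ i, μ i < 1 :=
    (hX.isHermitian.posDef_smul_one_sub_iff 1).1 (by rwa [one_smul])
  have htrace_inv_log_det : X⁻¹.trace - n + 4 * Real.log X.det ≤ 0 := by
    have := Finset.sum_nonpos fun i (_ : i ∈ Finset.univ) ↦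
      inv_sub_one_add_four_mul_log_nonpos (hlow i).le (hup i).le
    simpa [hX.trace_inv_eq_sum_inv_eigenvalues, hX.log_det_eq_sum_log_eigenvalues,
      Finset.sum_add_distrib, Finset.mul_sum] using this
  have htrace : X.trace < n := by
    have : Nonempty (Fin n) := ⟨⟨0, hn⟩⟩
    simpa [hX.isHermitian.trace_eq_sum_eigenvalues] using
      Finset.sum_lt_sum_of_nonempty Finset.univ_nonempty fun i _ ↦ hup i
  have hexp : Real.exp (-2 * n) < Real.exp (-2 * X.trace) := Real.exp_lt_exp.2 (by linarith)
  linarith
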